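/- arXiv:2602.15177 — 2 statements merged into one kernel-verified Lean document; each statement's English description precedes it below -/
import Mathlib

section
/- If there exist α₀ ∈ [0,1) and x₀ > 0 such that the value function satisfies u^{α₀}(x₀) < ∞, then u^α(x) < ∞ for all x > 0 and all α ∈ [0,1). -/
open MeasureTheory Filter Finset

noncomputable section
open scoped Classical

/-- Euclidean inner product on `Fin d → ℝ`. -/
def dotp {d : ℕ} (a b : Fin d → ℝ) : ℝ := ∑ j, a j * b j

/-- Euclidean norm on `Fin d → ℝ`. -/
def eucNorm {d : ℕ} (a : Fin d → ℝ) : ℝ := Real.sqrt (∑ j, a j ^ 2)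

/-- Accumulated realized gains and losses `G_t`, given the bank account history `eta`:
`G_t = ∑_{u=1}^t ( η_{u-1} r_u + ∑_{i=0}^{u-1} ⟨N_{i,u-1} - N_{i,u}, S_u - S_i⟩ )`. -/
def Gaux {d : ℕ} (S : ℕ → Fin d → ℝ) (r : ℕ → ℝ) (N : ℕ → ℕ → Fin d → ℝ)
    (eta : ℕ → ℝ) (t : ℕ) : ℝ :=
  ∑ u ∈ Finset.Icc 1 t,
    (eta (u - 1) * r u +
      ∑ i ∈ Finset.range u, dotp (fun j => N i (u - 1) j - N i u j) (fun j => S u j - S i j))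

/-- Limited-use-of-losses tax payments `Π_t = α · max_{0 ≤ u ≤ t} G_u`. -/
def Piaux {d : ℕ} (α : ℝ) (S : ℕ → Fin d → ℝ) (r : ℕ → ℝ) (N : ℕ → ℕ → Fin d → ℝ)
    (eta : ℕ → ℝ) (t : ℕ) : ℝ :=
  α * (Finset.range (t + 1)).sup' Finset.nonempty_range_add_one (fun u => Gaux S r N eta u)

/-- `etaHist α x S r N t` is the bank-account history after trading and taxes, up to time `t`:
for `s ≤ t` it gives `η_s`, and for `s > t` it gives `η_t`.  It is defined by the
self-financing recursion `η_{-1} = x`,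
`η_t - η_{t-1} = r_t η_{t-1} 1_{t ≥ 1} + ⟨∑_{i<t}(N_{i,t-1} - N_{i,t}) - N_{t,t}, S_t⟩
  - (Π_t - Π_{t-1}) 1_{t ≥ 1}`. -/
def etaHist {d : ℕ} (α x : ℝ) (S : ℕ → Fin d → ℝ) (r : ℕ → ℝ)
    (N : ℕ → ℕ → Fin d → ℝ) : ℕ → ℕ → ℝ :=
  Nat.rec (motive := fun _ => ℕ → ℝ)
    (fun _ => x - dotp (fun j => N 0 0 j) (fun j => S 0 j))
    (fun t e => fun s =>
      if s ≤ t then e s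
      else
        e t + r (t + 1) * e t
          + dotp
              (fun j => (∑ i ∈ Finset.range (t + 1), (N i t j - N i (t + 1) j))
                - N (t + 1) (t + 1) j)
              (fun j => S (t + 1) j)
          - (Piaux α S r N e (t + 1) - Piaux α S r N e t))

/-- A discrete-time market with horizon `T`, `d` risky assets, a filtration `F`,
adapted nonnegative-price processes are not required in general, and a nonnegative adapted
interest-rate process `r`. -/
structure Market (Ω : Type*) [m0 : MeasurableSpace Ω] (T d : ℕ) where
  P : Measure Ω
  hProb : IsProbabilityMeasure P
  F : ℕ → MeasurableSpace Ω
  F_le : ∀ t, F t ≤ m0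
  F_mono : Monotone F
  S : ℕ → Ω → Fin d → ℝ
  S_adapted : ∀ t, Measurable[F t] (S t)
  r : ℕ → Ω → ℝ
  r_nonneg : ∀ t ω, 0 ≤ r t ω
  r_adapted : ∀ t, Measurable[F t] (r t)

variable {Ω : Type*} [m0 : MeasurableSpace Ω] {T d : ℕ}

/-- A trading strategy: `N i t ω j` is the number of shares of asset `j` bought at time `i`
and still held after trading at time `t`.  It is `F t`-adapted, nonnegative, nonincreasing
in `t` (for `i ≤ t < T`), forced to liquidate at `T`, and zero before the purchase date. -/
def Market.IsStrategy (M : Market Ω T d) (N : ℕ → ℕ → Ω → Fin d → ℝ) : Prop :=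
  (∀ i t, Measurable[M.F t] (N i t)) ∧
  (∀ i t ω j, 0 ≤ N i t ω j) ∧
  (∀ i t, i ≤ t → t < T → ∀ ω j, N i (t + 1) ω j ≤ N i t ω j) ∧
  (∀ i ω j, N i T ω j = 0) ∧
  (∀ i t, t < i → ∀ ω j, N i t ω j = 0)

/-- After-tax terminal wealth `V^α(x,N) = η_T`. -/
def Market.V (M : Market Ω T d) (α x : ℝ) (N : ℕ → ℕ → Ω → Fin d → ℝ) (ω : Ω) : ℝ :=
  etaHist α x (fun t => M.S t ω) (fun t => M.r t ω) (fun i t => N i t ω) T T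

/-- The frictionless (tax-free) wealth process `V^0_t(x,N) = η_t + ⟨∑_{i≤t} N_{i,t}, S_t⟩`,
where `η` is the bank account for tax rate `0`. -/
def Market.V0proc (M : Market Ω T d) (x : ℝ) (N : ℕ → ℕ → Ω → Fin d → ℝ) (t : ℕ) (ω : Ω) : ℝ :=
  etaHist 0 x (fun u => M.S u ω) (fun u => M.r u ω) (fun i u => N i u ω) t t
    + dotp (fun j => ∑ i ∈ Finset.range (t + 1), N i t ω j) (fun j => M.S t ω j)

/-- The no-arbitrage condition for tax rate `α`. -/
def Market.NA (M : Market Ω T d) (α : ℝ) : Prop :=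
  ∀ N, M.IsStrategy N → (∀ᵐ ω ∂M.P, 0 ≤ M.V α 0 N ω) → ∀ᵐ ω ∂M.P, M.V α 0 N ω = 0

/-- The set `{V^α(x,N) : N ∈ 𝒩} - L^0(F_T; ℝ₊)` of attainable after-tax terminal wealths. -/
def Market.Vset (M : Market Ω T d) (α x : ℝ) : Set (Ω → ℝ) :=
  {f | ∃ N, M.IsStrategy N ∧
    ∃ g : Ω → ℝ, Measurable[M.F T] g ∧ (∀ ω, 0 ≤ g ω) ∧ f = fun ω => M.V α x N ω - g ω}

/-- The frictionless wealth recursion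
`V_t = (1+r_t) V_{t-1} + ⟨∑_{i<t} N_{i,t-1}, S_t - (1+r_t) S_{t-1}⟩`. -/
def wealth0 {d : ℕ} (S : ℕ → Fin d → ℝ) (r : ℕ → ℝ) (N : ℕ → ℕ → Fin d → ℝ) (x : ℝ) :
    ℕ → ℝ :=
  Nat.rec (motive := fun _ => ℝ) x (fun t W =>
    (1 + r (t + 1)) * W
      + dotp (fun j => ∑ i ∈ Finset.range (t + 1), N i t j)
          (fun j => S (t + 1) j - (1 + r (t + 1)) * S t j))

/-- Frictionless terminal wealth `V^0(x,N)`. -/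
def Market.V0 (M : Market Ω T d) (x : ℝ) (N : ℕ → ℕ → Ω → Fin d → ℝ) (ω : Ω) : ℝ :=
  wealth0 (fun t => M.S t ω) (fun t => M.r t ω) (fun i t => N i t ω) x T

/-- No-arbitrage for the frictionless model. -/
def Market.NA0 (M : Market Ω T d) : Prop :=
  ∀ N, M.IsStrategy N → (∀ᵐ ω ∂M.P, 0 ≤ M.V0 0 N ω) → ∀ᵐ ω ∂M.P, M.V0 0 N ω = 0

/-- The cone `ℛ_t` of reversible one-period strategies. -/
def Market.RevCone (M : Market Ω T d) (t : ℕ) : Set (Ω → Fin d → ℝ) :=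
  {β | Measurable[M.F t] β ∧ (∀ ω j, 0 ≤ β ω j) ∧
    ∀ᵐ ω ∂M.P, dotp (β ω) (fun j => M.S (t + 1) ω j - (1 + M.r (t + 1) ω) * M.S t ω j) = 0}

/-- `q` is the purely nonreversible part `q_t(β)` of `β`: it is `F_t`-measurable, nonnegative,
`β - q` is reversible, and `q` has minimal Euclidean norm among all such decompositions. -/
def Market.IsQ (M : Market Ω T d) (t : ℕ) (β q : Ω → Fin d → ℝ) : Prop :=
  Measurable[M.F t] q ∧ (∀ ω j, 0 ≤ q ω j) ∧
  (fun ω j => β ω j - q ω j) ∈ M.RevCone t ∧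
  ∀ q' : Ω → Fin d → ℝ, Measurable[M.F t] q' → (∀ ω j, 0 ≤ q' ω j) →
    (fun ω j => β ω j - q' ω j) ∈ M.RevCone t →
    ∀ᵐ ω ∂M.P, eucNorm (q ω) ≤ eucNorm (q' ω)

/-- `β` is purely nonreversible, i.e. `q_t(β) = β`. -/
def Market.PurelyNonRev (M : Market Ω T d) (t : ℕ) (β : Ω → Fin d → ℝ) : Prop :=
  M.IsQ t β β

/-- A reaction function: `R ω a i t` may depend on `ω` only through `F_t` and on the action
history `a` only through the actions up to time `t`; it is nonnegative, nonincreasing in `t`,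
vanishes at and after the horizon `T` and before the purchase date. -/
structure ReactionFun (M : Market Ω T d) where
  R : Ω → (ℕ → ℕ → Fin d → ℝ) → ℕ → ℕ → Fin d → ℝ
  nonneg : ∀ ω a i t j, 0 ≤ R ω a i t j
  adapted_actions : ∀ ω a a' i t, (∀ i' t', t' ≤ t → a i' t' = a' i' t') →
    R ω a i t = R ω a' i t
  meas : ∀ i t, Measurable[(M.F t).prod inferInstance]
    (fun p : Ω × (ℕ → ℕ → Fin d → ℝ) => R p.1 p.2 i t)
  antitone : ∀ ω a i t, i ≤ t → t + 2 ≤ T → ∀ j, R ω a i (t + 1) j ≤ R ω a i t j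
  upper : ∀ ω a i t, T ≤ t → ∀ j, R ω a i t j = 0
  lower : ∀ ω a i t, t < i → ∀ j, R ω a i t j = 0

/-- The strategy `R(N)` produced by a reaction function from a strategy `N`. -/
def ReactionFun.apply {M : Market Ω T d} (Rf : ReactionFun M)
    (N : ℕ → ℕ → Ω → Fin d → ℝ) : ℕ → ℕ → Ω → Fin d → ℝ :=
  fun i t ω => Rf.R ω (fun i' t' => N i' t' ω) i t

/-- `max_{i=0,…,T-1, j=1,…,d} N_{i,i,j}`. -/
def stratMax {Ω : Type*} {d : ℕ} (T : ℕ) (N : ℕ → ℕ → Ω → Fin d → ℝ) (ω : Ω) : ℝ :=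
  ⨆ i ∈ Finset.range T, ⨆ j : Fin d, N i i ω j

/-- A family of random variables is bounded in `L⁰` (bounded in probability). -/
def BoundedInL0 {Ω : Type*} [MeasurableSpace Ω] (P : Measure Ω) (𝒮 : Set (Ω → ℝ)) : Prop :=
  ∀ ε : ℝ, 0 < ε → ∃ C : ℝ, ∀ f ∈ 𝒮, P {ω | C < |f ω|} ≤ ENNReal.ofReal ε

/-- The "no unbounded non-substitutable investment with bounded risk" condition. -/
def Market.NUIBR (M : Market Ω T d) (α : ℝ) : Prop :=
  ∀ x : ℝ, ∃ Rf : ReactionFun M,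
    (∀ N, M.IsStrategy N → M.IsStrategy (Rf.apply N)) ∧
    (∀ N, M.IsStrategy N → ∀ᵐ ω ∂M.P, M.V α x N ω ≤ M.V α x (Rf.apply N) ω) ∧
    ∀ K : ℝ, 0 ≤ K →
      BoundedInL0 M.P (convexHull ℝ
        {f : Ω → ℝ | ∃ N, M.IsStrategy N ∧ (∀ᵐ ω ∂M.P, -K ≤ M.V α x N ω) ∧
          f = stratMax T (Rf.apply N)})

/-- A set of random variables is closed with respect to convergence in probability
(as a subset of `L⁰`, i.e. up to almost-sure equality). -/
def ClosedInProbability {Ω : Type*} [MeasurableSpace Ω] (P : Measure Ω)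
    (𝒮 : Set (Ω → ℝ)) : Prop :=
  ∀ (f : ℕ → Ω → ℝ) (g : Ω → ℝ), (∀ n, f n ∈ 𝒮) →
    TendstoInMeasure P f Filter.atTop g → ∃ g' ∈ 𝒮, g' =ᵐ[P] g


/-- Bank account process for an artificial linear tax rule `τ`:
taxes `Π^{(τ)}_t = α · G_{τ_t}` are paid according to the rule `τ` (with `τ 0 = 0`,
so that `Π^{(τ)}_0 = 0`).  `etaTau α x S r N τ t s` gives `η^{(τ)}_s` for `s ≤ t`. -/
def etaTau {d : ℕ} (α x : ℝ) (S : ℕ → Fin d → ℝ) (r : ℕ → ℝ)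
    (N : ℕ → ℕ → Fin d → ℝ) (τ : ℕ → ℕ) : ℕ → ℕ → ℝ :=
  Nat.rec (motive := fun _ => ℕ → ℝ)
    (fun _ => x - dotp (fun j => N 0 0 j) (fun j => S 0 j))
    (fun t e => fun s =>
      if s ≤ t then e s
      else
        e t + r (t + 1) * e t
          + dotp
              (fun j => (∑ i ∈ Finset.range (t + 1), (N i t j - N i (t + 1) j))
                - N (t + 1) (t + 1) j)
              (fun j => S (t + 1) j)
          - (α * Gaux S r N e (τ (t + 1)) - α * Gaux S r N e (τ t)))

variable {Ω : Type*} [m0 : MeasurableSpace Ω] {T d : ℕ}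

/-- An artificial linear tax rule: an adapted `{0,…,T}`-valued process `τ` with `τ_0 = 0`,
`τ` nondecreasing in `t`, `τ_t ≤ t`, and `τ_{τ_t} = τ_t` whenever `τ_t ≥ 1`. -/
def Market.IsTaxRule (M : Market Ω T d) (τ : ℕ → Ω → ℕ) : Prop :=
  (∀ ω, τ 0 ω = 0) ∧
  (∀ t, Measurable[M.F t] (τ t)) ∧
  (∀ t ω, τ t ω ≤ t) ∧
  (∀ t ω, τ t ω ≤ T) ∧
  (∀ s t, s ≤ t → ∀ ω, τ s ω ≤ τ t ω) ∧
  (∀ t ω, 1 ≤ τ t ω → τ (τ t ω) ω = τ t ω)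

/-- Terminal bank account `η^{(τ)}_T(N)` under the artificial tax rule `τ`. -/
def Market.etaTauT (M : Market Ω T d) (α x : ℝ) (N : ℕ → ℕ → Ω → Fin d → ℝ)
    (τ : ℕ → Ω → ℕ) (ω : Ω) : ℝ :=
  etaTau α x (fun t => M.S t ω) (fun t => M.r t ω) (fun i t => N i t ω) (fun t => τ t ω) T T

/-- A strategy realizes losses: it does not keep shares that trade below their purchase
price. -/
def Market.RealizesLosses (M : Market Ω T d) (N : ℕ → ℕ → Ω → Fin d → ℝ) : Prop :=
  ∀ i t j, i < t → t ≤ T → ∀ᵐ ω ∂M.P, M.S t ω j < M.S i ω j → N i t ω j = 0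

/-- The loss bound `L_t(N) = ((−x) ∨ 0 + ∑_{s<t} ⟨q_s(∑_{i≤s} N_{i,s}), S_s⟩)(1+r̄)^T`,
expressed through a given family `q s` of purely nonreversible parts. -/
def Lfun {Ω : Type*} {d : ℕ} (x rbar : ℝ) (T : ℕ) (S : ℕ → Ω → Fin d → ℝ)
    (q : ℕ → Ω → Fin d → ℝ) (t : ℕ) (ω : Ω) : ℝ :=
  (max (-x) 0 + ∑ s ∈ Finset.range t, dotp (q s ω) (fun j => S s ω j)) * (1 + rbar) ^ T

/-- A stopping time of the filtration `F`. -/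
def IsStoppingTimeFun {Ω : Type*} (F : ℕ → MeasurableSpace Ω) (τ : Ω → ℕ) : Prop :=
  ∀ t : ℕ, MeasurableSet[F t] {ω | τ ω ≤ t}

/-- The family of random variables over which the essential infimum defining `ε_t` is
taken. -/
def Market.epsFamily (M : Market Ω T d) (t : ℕ) : Set (Ω → ENNReal) :=
  {g | ∃ (ε : Ω → ℝ) (A : Set Ω) (N : ℕ → ℕ → Ω → Fin d → ℝ),
    Measurable[M.F t] ε ∧ (∀ ω, ε ω ∈ Set.Icc (0:ℝ) 1) ∧
    MeasurableSet[M.F t] A ∧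
    M.IsStrategy N ∧ (∀ i, i < t → ∀ ω j, N i i ω j = 0) ∧
    M.PurelyNonRev t (fun ω => N t t ω) ∧
    (∀ᵐ ω ∂M.P, eucNorm (N t t ω) = Set.indicator A (fun _ => (1:ℝ)) ω) ∧
    (∀ᵐ ω ∂M.P,
      (M.P[Set.indicator {ω' | M.V0 0 N ω' ≤ - ε ω'} (fun _ => (1:ℝ)) | M.F t]) ω ≤ ε ω) ∧
    g = fun ω => if ω ∈ A then ENNReal.ofReal (ε ω) else (⊤ : ENNReal)}

/-- `e` is the essential infimum of the family `𝒮` of `[0,∞]`-valued random variables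
(with respect to `P`, measurable with respect to `m'`). -/
def IsEssInfOfSet {Ω : Type*} [MeasurableSpace Ω] (m' : MeasurableSpace Ω) (P : Measure Ω)
    (𝒮 : Set (Ω → ENNReal)) (e : Ω → ENNReal) : Prop :=
  Measurable[m'] e ∧ (∀ g ∈ 𝒮, ∀ᵐ ω ∂P, e ω ≤ g ω) ∧
  ∀ e' : Ω → ENNReal, Measurable[m'] e' → (∀ g ∈ 𝒮, ∀ᵐ ω ∂P, e' ω ≤ g ω) →
    ∀ᵐ ω ∂P, e' ω ≤ e ω

/-- The positive part of an extended-real number, as an element of `[0,∞]`. -/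
def erealPos (y : EReal) : ENNReal := if y = ⊤ then ⊤ else ENNReal.ofReal y.toReal

/-- A utility function: `U = -∞` on the negative half-line, real-valued, nondecreasing and
concave on the positive half-line (with real restriction `u`), and continuous from the
right at `0`. -/
structure UtilityFun where
  U : ℝ → EReal
  u : ℝ → ℝ
  neg_bot : ∀ y : ℝ, y < 0 → U y = ⊥
  pos_real : ∀ y : ℝ, 0 < y → U y = (u y : EReal)
  mono : MonotoneOn u (Set.Ioi (0:ℝ))
  concave : ConcaveOn ℝ (Set.Ioi (0:ℝ)) u
  zero_lim : Filter.Tendsto U (nhdsWithin 0 (Set.Ioi (0:ℝ))) (nhds (U 0))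

/-- Expected utility `E[U(X)] = E[U⁺(X)] - E[U⁻(X)]`, with the convention that it equals
`-∞` whenever `E[U⁻(X)] = ∞`. -/
def expUtility {Ω : Type*} [MeasurableSpace Ω] (P : Measure Ω) (Uf : UtilityFun)
    (X : Ω → ℝ) : EReal :=
  if (∫⁻ ω, erealPos (-(Uf.U (X ω))) ∂P) = ⊤ then ⊥
  else ((∫⁻ ω, erealPos (Uf.U (X ω)) ∂P : ENNReal) : EReal)
    - ((∫⁻ ω, erealPos (-(Uf.U (X ω))) ∂P : ENNReal) : EReal)

/-- The value function `u^α(x) = sup_{N ∈ 𝒜^α(x)} E[U(V^α(x,N))]` of the utility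
maximization problem with taxes. -/
def Market.valueFn (M : Market Ω T d) (Uf : UtilityFun) (α x : ℝ) : EReal :=
  ⨆ N ∈ {N : ℕ → ℕ → Ω → Fin d → ℝ |
      M.IsStrategy N ∧ ∀ᵐ ω ∂M.P, 0 ≤ M.V α x N ω},
    expUtility M.P Uf (fun ω => M.V α x N ω)

/-- The value function `u^0(x)` of the frictionless utility maximization problem. -/
def Market.valueFn0 (M : Market Ω T d) (Uf : UtilityFun) (x : ℝ) : EReal :=
  ⨆ N ∈ {N : ℕ → ℕ → Ω → Fin d → ℝ |
      M.IsStrategy N ∧ ∀ᵐ ω ∂M.P, 0 ≤ M.V0 x N ω},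
    expUtility M.P Uf (fun ω => M.V0 x N ω)

/-- The set `{V^α(x,N) : N ∈ 𝒜^α(x)} - L^0(F_T; ℝ₊)`. -/
def Market.VsetNonneg (M : Market Ω T d) (α x : ℝ) : Set (Ω → ℝ) :=
  {f | ∃ N, M.IsStrategy N ∧ (∀ᵐ ω ∂M.P, 0 ≤ M.V α x N ω) ∧
    ∃ g : Ω → ℝ, Measurable[M.F T] g ∧ (∀ ω, 0 ≤ g ω) ∧ f = fun ω => M.V α x N ω - g ω}

/-- The set `{V^0(x,N) : N ∈ 𝒩} - L^0(F_T; ℝ₊)` for the frictionless model. -/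
def Market.V0set (M : Market Ω T d) (x : ℝ) : Set (Ω → ℝ) :=
  {f | ∃ N, M.IsStrategy N ∧
    ∃ g : Ω → ℝ, Measurable[M.F T] g ∧ (∀ ω, 0 ≤ g ω) ∧ f = fun ω => M.V0 x N ω - g ω}

/-- A measurable (set-valued) random set: preimages of open sets are measurable. -/
def MeasRandomSet {Ω : Type*} (m : MeasurableSpace Ω) {d : ℕ}
    (K : Ω → Set (Fin d → ℝ)) : Prop :=
  ∀ O : Set (Fin d → ℝ), IsOpen O → MeasurableSet[m] {ω | (K ω ∩ O).Nonempty}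

/-- The random set `A_t = {β ∈ 𝒫_t : 1 + r_{t+1} + ⟨β, S_{t+1} - (1+r_{t+1})S_t⟩ ≥ 0 a.s.}`. -/
def Market.AtSet (M : Market Ω T d) (t : ℕ) : Set (Ω → Fin d → ℝ) :=
  {β | M.PurelyNonRev t β ∧
    ∀ᵐ ω ∂M.P, 0 ≤ 1 + M.r (t + 1) ω
      + dotp (β ω) (fun j => M.S (t + 1) ω j - (1 + M.r (t + 1) ω) * M.S t ω j)}

/-!
Taxes only lower terminal wealth, so `V^α(x, N)` is at most the frictionless wealth `V^0(x, N)`.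
Conversely, from `x₀` and at tax rate `α₀` one can secure a fixed fraction of any frictionless
wealth: follow `x₀ / (2x)` times `N`, but sell and rebuy the whole position at every date (a full
wash), so that gains are realized at once. Whenever the realized gains reach a new maximum, tax is
paid and the position is scaled down by `1 - α₀`; this happens at most `T` times, and the
after-tax wealth is at least `c V^α(x, N) + ε` for some `c, ε > 0`. Concavity bounds `U(V^α(x, N))`
by an affine function of `U` at that wealth, hence `u^α(x)` by an affine function of `u^{α₀}(x₀)`.
-/

section Dotp

variable {d : ℕ}

lemma dotp_sub_left (a b c : Fin d → ℝ) :
    dotp (fun j => a j - b j) c = dotp a c - dotp b c := by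
  simp [dotp, sub_mul, Finset.sum_sub_distrib]

lemma dotp_sub_right (a b c : Fin d → ℝ) :
    dotp a (fun j => b j - c j) = dotp a b - dotp a c := by
  simp [dotp, mul_sub, Finset.sum_sub_distrib]

lemma dotp_mul_left (k : ℝ) (a b : Fin d → ℝ) :
    dotp (fun j => k * a j) b = k * dotp a b := by
  simp [dotp, Finset.mul_sum, mul_assoc]

lemma dotp_mul_right (a : Fin d → ℝ) (k : ℝ) (b : Fin d → ℝ) :
    dotp a (fun j => k * b j) = k * dotp a b := by
  simp [dotp, Finset.mul_sum, mul_left_comm]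

end Dotp

def holdings {d : ℕ} (N : ℕ → ℕ → Fin d → ℝ) (t : ℕ) : Fin d → ℝ :=
  fun j => ∑ i ∈ Finset.range (t + 1), N i t j

section BankAccount

variable {d : ℕ} (α x : ℝ) (S : ℕ → Fin d → ℝ) (r : ℕ → ℝ) (N : ℕ → ℕ → Fin d → ℝ)

def bankAccount (t : ℕ) : ℝ := etaHist α x S r N t t

lemma etaHist_succ (t s : ℕ) :
    etaHist α x S r N (t + 1) s =
      if s ≤ t then etaHist α x S r N t s
      else etaHist α x S r N t t + r (t + 1) * etaHist α x S r N t t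
        + dotp (fun j => (∑ i ∈ Finset.range (t + 1), (N i t j - N i (t + 1) j))
            - N (t + 1) (t + 1) j) (S (t + 1))
        - (Piaux α S r N (etaHist α x S r N t) (t + 1)
            - Piaux α S r N (etaHist α x S r N t) t) := rfl

lemma etaHist_of_le {t s : ℕ} (h : s ≤ t) : etaHist α x S r N t s = bankAccount α x S r N s := by
  induction t with
  | zero => rw [Nat.le_zero.mp h]; rfl
  | succ t ih =>
    rcases h.lt_or_eq with h | rfl
    · rw [etaHist_succ, if_pos (Nat.lt_succ_iff.mp h), ih (Nat.lt_succ_iff.mp h)]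
    · rfl

lemma Gaux_congr {e e' : ℕ → ℝ} {u : ℕ} (h : ∀ v < u, e v = e' v) :
    Gaux S r N e u = Gaux S r N e' u :=
  Finset.sum_congr rfl fun v hv => by rw [h (v - 1) (by grind)]

lemma Gaux_succ (e : ℕ → ℝ) (u : ℕ) :
    Gaux S r N e (u + 1) = Gaux S r N e u + (e u * r (u + 1) +
      ∑ i ∈ Finset.range (u + 1),
        dotp (fun j => N i u j - N i (u + 1) j) (fun j => S (u + 1) j - S i j)) := by
  rw [Gaux, Finset.sum_Icc_succ_top (by omega)]
  rfl

lemma Piaux_eq_partialSups (e : ℕ → ℝ) (t : ℕ) :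
    Piaux α S r N e t = α * partialSups (Gaux S r N e) t := by
  rw [partialSups_eq_sup'_range]
  rfl

lemma Piaux_congr {e e' : ℕ → ℝ} {t : ℕ} (h : ∀ v < t, e v = e' v) :
    Piaux α S r N e t = Piaux α S r N e' t := by
  simp only [Piaux_eq_partialSups, partialSups_eq_sup'_range]
  exact congrArg _ (Finset.sup'_congr _ rfl fun u hu =>
    Gaux_congr S r N fun v hv => h v (by grind))

lemma Piaux_le_succ (hα : 0 ≤ α) (e : ℕ → ℝ) (t : ℕ) :
    Piaux α S r N e t ≤ Piaux α S r N e (t + 1) := by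
  simp only [Piaux_eq_partialSups]
  exact mul_le_mul_of_nonneg_left (partialSups_monotone _ t.le_succ) hα

lemma bankAccount_zero : bankAccount α x S r N 0 = x - dotp (N 0 0) (S 0) := rfl

lemma bankAccount_succ (t : ℕ) :
    bankAccount α x S r N (t + 1) =
      bankAccount α x S r N t + r (t + 1) * bankAccount α x S r N t
        + dotp (fun j => (∑ i ∈ Finset.range (t + 1), (N i t j - N i (t + 1) j))
            - N (t + 1) (t + 1) j) (S (t + 1))
        - (Piaux α S r N (bankAccount α x S r N) (t + 1)
            - Piaux α S r N (bankAccount α x S r N) t) := by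
  have hist : ∀ v < t + 1, etaHist α x S r N t v = bankAccount α x S r N v :=
    fun v hv => etaHist_of_le α x S r N (Nat.lt_succ_iff.mp hv)
  rw [bankAccount, etaHist_succ, if_neg (by omega), Piaux_congr α S r N hist,
    Piaux_congr α S r N fun v hv => hist v (by omega), hist t t.lt_succ_self]

end BankAccount

section Frictionless

variable {d : ℕ} (x : ℝ) (S : ℕ → Fin d → ℝ) (r : ℕ → ℝ) (N : ℕ → ℕ → Fin d → ℝ)

lemma wealth0_succ (t : ℕ) :
    wealth0 S r N x (t + 1) = (1 + r (t + 1)) * wealth0 S r N x t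
      + (dotp (holdings N t) (S (t + 1)) - (1 + r (t + 1)) * dotp (holdings N t) (S t)) := by
  rw [← dotp_mul_right, ← dotp_sub_right]
  rfl

def compounding (r : ℕ → ℝ) : ℕ → ℝ
  | 0 => 1
  | t + 1 => (1 + r (t + 1)) * compounding r t

lemma one_le_compounding (hr : ∀ t, 0 ≤ r t) (t : ℕ) : 1 ≤ compounding r t := by
  induction t with
  | zero => rfl
  | succ t ih => exact one_le_mul_of_one_le_of_one_le (by linarith [hr (t + 1)]) ih

lemma wealth0_const_mul (κ x' : ℝ) (t : ℕ) :
    wealth0 S r (fun i t j => κ * N i t j) x' t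
      = κ * wealth0 S r N x t + (x' - κ * x) * compounding r t := by
  induction t with
  | zero => simp [wealth0, compounding]
  | succ t ih =>
    have hκ : holdings (fun i t j => κ * N i t j) t = fun j => κ * holdings N t j := by
      funext j
      simp [holdings, Finset.mul_sum]
    rw [wealth0_succ, wealth0_succ, ih, hκ, dotp_mul_left, dotp_mul_left, compounding]
    ring

lemma dotp_trades_eq_sub_holdings (t : ℕ) :
    dotp (fun j => (∑ i ∈ Finset.range (t + 1), (N i t j - N i (t + 1) j))
        - N (t + 1) (t + 1) j) (S (t + 1))
      = dotp (holdings N t) (S (t + 1)) - dotp (holdings N (t + 1)) (S (t + 1)) := by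
  rw [← dotp_sub_left]
  congr 1
  funext j
  simp only [holdings, Finset.sum_range_succ _ (t + 1), Finset.sum_sub_distrib]
  ring

variable {α : ℝ} (hα : 0 ≤ α) (hr : ∀ t, 0 ≤ r t)
include hα hr

/-- Each period's tax payment `Π_{t+1} - Π_t` is nonnegative, so only lowers the bank account. -/
lemma bankAccount_add_dotp_le_wealth0 (t : ℕ) :
    bankAccount α x S r N t + dotp (holdings N t) (S t) ≤ wealth0 S r N x t := by
  induction t with
  | zero =>
    have h0 : holdings N 0 = N 0 0 := funext fun j => by simp [holdings]
    simp [bankAccount_zero, h0, wealth0]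
  | succ t ih =>
    rw [bankAccount_succ, wealth0_succ, dotp_trades_eq_sub_holdings]
    have htax := Piaux_le_succ α S r N hα (bankAccount α x S r N) t
    nlinarith [mul_le_mul_of_nonneg_left ih (by linarith [hr (t + 1)] : 0 ≤ 1 + r (t + 1))]

lemma etaHist_le_wealth0 (T : ℕ) (hT : ∀ i j, N i T j = 0) :
    etaHist α x S r N T T ≤ wealth0 S r N x T := by
  simpa [bankAccount, holdings, hT, dotp] using bankAccount_add_dotp_le_wealth0 x S r N hα hr T

end Frictionless

/-- The state of the full-wash strategy at one date: `mu` scales the target position, `G` are the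
realized gains, `Gam` is their running maximum and `eta` is the bank account. -/
structure FullWashState where
  mu : ℝ
  G : ℝ
  Gam : ℝ
  eta : ℝ

section FullWash

variable {d : ℕ} (β x : ℝ) (S : ℕ → Fin d → ℝ) (r : ℕ → ℝ) (N : ℕ → ℕ → Fin d → ℝ)

/-- At every date the whole position is sold and `mu • holdings N t` is bought back, so gains are
realized at once; whenever they reach a new maximum, taxes are due and `mu` shrinks by `1 - β`. -/
def fullWash : ℕ → FullWashState
  | 0 => ⟨1, 0, 0, x - dotp (holdings N 0) (S 0)⟩
  | t + 1 =>
    let p := fullWash t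
    let G := p.G + p.eta * r (t + 1)
      + p.mu * (dotp (holdings N t) (S (t + 1)) - dotp (holdings N t) (S t))
    let Gam := max p.Gam G
    let mu := if p.Gam < G then (1 - β) * p.mu else p.mu
    ⟨mu, G, Gam, p.eta + r (t + 1) * p.eta
      + (p.mu * dotp (holdings N t) (S (t + 1)) - mu * dotp (holdings N (t + 1)) (S (t + 1)))
      - (β * Gam - β * p.Gam)⟩

def fullWashStrategy : ℕ → ℕ → Fin d → ℝ :=
  fun i t j => if i = t then (fullWash β x S r N t).mu * holdings N t j else 0

def fullWashValue (t : ℕ) : ℝ :=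
  (fullWash β x S r N t).eta + (fullWash β x S r N t).mu * dotp (holdings N t) (S t)

lemma fullWash_G_succ (t : ℕ) :
    (fullWash β x S r N (t + 1)).G = (fullWash β x S r N t).G
      + (fullWash β x S r N t).eta * r (t + 1) + (fullWash β x S r N t).mu
        * (dotp (holdings N t) (S (t + 1)) - dotp (holdings N t) (S t)) := rfl

lemma fullWash_Gam_succ (t : ℕ) :
    (fullWash β x S r N (t + 1)).Gam
      = max (fullWash β x S r N t).Gam (fullWash β x S r N (t + 1)).G := rfl

lemma fullWash_mu_succ (t : ℕ) :
    (fullWash β x S r N (t + 1)).mu =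
      if (fullWash β x S r N t).Gam < (fullWash β x S r N (t + 1)).G
      then (1 - β) * (fullWash β x S r N t).mu else (fullWash β x S r N t).mu := rfl

lemma fullWash_eta_succ (t : ℕ) :
    (fullWash β x S r N (t + 1)).eta = (fullWash β x S r N t).eta
      + r (t + 1) * (fullWash β x S r N t).eta
      + ((fullWash β x S r N t).mu * dotp (holdings N t) (S (t + 1))
        - (fullWash β x S r N (t + 1)).mu * dotp (holdings N (t + 1)) (S (t + 1)))
      - (β * (fullWash β x S r N (t + 1)).Gam - β * (fullWash β x S r N t).Gam) := rfl

lemma holdings_fullWashStrategy (t : ℕ) :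
    holdings (fullWashStrategy β x S r N) t = fun j => (fullWash β x S r N t).mu * holdings N t j :=
  funext fun j => by simp [holdings, fullWashStrategy]

lemma sum_sales_fullWashStrategy (u : ℕ) :
    ∑ i ∈ Finset.range (u + 1), dotp
        (fun j => fullWashStrategy β x S r N i u j - fullWashStrategy β x S r N i (u + 1) j)
        (fun j => S (u + 1) j - S i j)
      = (fullWash β x S r N u).mu
        * (dotp (holdings N u) (S (u + 1)) - dotp (holdings N u) (S u)) := by
  rw [Finset.sum_eq_single_of_mem u (Finset.self_mem_range_succ u)]
  · have hu : u ≠ u + 1 := by omega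
    simp only [fullWashStrategy, ↓reduceIte, hu, sub_zero]
    rw [dotp_mul_left, dotp_sub_right]
  · intro i hi hiu
    have hiu' : i ≠ u + 1 := by grind
    simp [fullWashStrategy, hiu, hiu', dotp]

variable {x S r N}

lemma Gaux_fullWashStrategy {e : ℕ → ℝ} {u : ℕ} (he : ∀ v < u, e v = (fullWash β x S r N v).eta) :
    Gaux S r (fullWashStrategy β x S r N) e u = (fullWash β x S r N u).G := by
  induction u with
  | zero => rfl
  | succ u ih =>
    rw [Gaux_succ, ih fun v hv => he v (by omega), sum_sales_fullWashStrategy, he u (by omega),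
      fullWash_G_succ]
    ring

lemma partialSups_Gaux_fullWashStrategy {e : ℕ → ℝ} {t : ℕ}
    (he : ∀ v < t, e v = (fullWash β x S r N v).eta) :
    partialSups (Gaux S r (fullWashStrategy β x S r N) e) t = (fullWash β x S r N t).Gam := by
  induction t with
  | zero => rfl
  | succ t ih =>
    rw [← Order.succ_eq_add_one, partialSups_succ, ih fun v hv => he v (by omega),
      Order.succ_eq_add_one, Gaux_fullWashStrategy β he, fullWash_Gam_succ]

lemma bankAccount_fullWashStrategy (t : ℕ) :
    bankAccount β x S r (fullWashStrategy β x S r N) t = (fullWash β x S r N t).eta := by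
  induction t using Nat.strong_induction_on with
  | _ t ih =>
    match t with
    | 0 =>
      have h0 : fullWashStrategy β x S r N 0 0 = holdings N 0 :=
        funext fun j => by simp [fullWashStrategy, fullWash]
      rw [bankAccount_zero, h0]
      rfl
    | t + 1 =>
      rw [bankAccount_succ, dotp_trades_eq_sub_holdings, holdings_fullWashStrategy,
        holdings_fullWashStrategy, dotp_mul_left, dotp_mul_left, Piaux_eq_partialSups,
        Piaux_eq_partialSups, partialSups_Gaux_fullWashStrategy β ih,
        partialSups_Gaux_fullWashStrategy β fun v hv => ih v (by omega), ih t (by omega),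
        fullWash_eta_succ]

end FullWash

section FullWashBounds

variable {d : ℕ} (β x : ℝ) (S : ℕ → Fin d → ℝ) (r : ℕ → ℝ) (N : ℕ → ℕ → Fin d → ℝ)

lemma fullWash_G_eq (t : ℕ) :
    (fullWash β x S r N t).G = fullWashValue β x S r N t - x + β * (fullWash β x S r N t).Gam := by
  induction t with
  | zero => simp [fullWashValue, fullWash]
  | succ t ih =>
    simp only [fullWashValue] at ih ⊢
    rw [fullWash_eta_succ, fullWash_G_succ, ih]
    ring

lemma fullWash_Gam_nonneg (t : ℕ) : 0 ≤ (fullWash β x S r N t).Gam := by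
  induction t with
  | zero => rfl
  | succ t ih => exact ih.trans (le_max_left _ _)

lemma fullWash_mu_mem (hβ0 : 0 ≤ β) (hβ1 : β ≤ 1) (t : ℕ) :
    (fullWash β x S r N t).mu ∈ Set.Icc ((1 - β) ^ t) 1 := by
  induction t with
  | zero => simp [fullWash]
  | succ t ih =>
    obtain ⟨ih1, ih2⟩ := ih
    have hμ0 : 0 ≤ (fullWash β x S r N t).mu := (pow_nonneg (by linarith) t).trans ih1
    rw [fullWash_mu_succ, pow_succ']
    split_ifs
    · exact ⟨mul_le_mul_of_nonneg_left ih1 (by linarith), by nlinarith⟩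
    · exact ⟨by nlinarith [pow_nonneg (by linarith : 0 ≤ 1 - β) t], ih2⟩

lemma add_mu_mul_wealth0_sub_le_fullWashValue (hx : 0 ≤ x) (hr : ∀ t, 0 ≤ r t) (hβ0 : 0 ≤ β)
    (hβ1 : β ≤ 1) (t : ℕ) :
    x + (fullWash β x S r N t).mu * (wealth0 S r N x t - x) ≤ fullWashValue β x S r N t := by
  induction t with
  | zero => simp [fullWashValue, fullWash, wealth0]
  | succ t ih =>
    obtain ⟨hμ1, hμ⟩ := fullWash_mu_mem β x S r N hβ0 hβ1 t
    have hG := fullWash_G_eq β x S r N t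
    have hΓ := fullWash_Gam_nonneg β x S r N t
    simp only [fullWashValue] at ih hG ⊢
    have hr1 := hr (t + 1)
    have hslack : 0 ≤ r (t + 1) * (x * (1 - (fullWash β x S r N t).mu)) :=
      mul_nonneg hr1 (mul_nonneg hx (by linarith))
    have hgrow := mul_le_mul_of_nonneg_left ih (by linarith : 0 ≤ 1 + r (t + 1))
    rw [fullWash_eta_succ, wealth0_succ, fullWash_Gam_succ, fullWash_mu_succ]
    split_ifs with hnew
    · -- A new maximum: the gain is taxed at rate `β` and `mu` shrinks by the same factor.
      rw [max_eq_right hnew.le, fullWash_G_succ]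
      nlinarith [mul_nonneg hβ0 hΓ]
    · rw [max_eq_left (not_lt.mp hnew)]
      nlinarith

lemma mul_wealth0_le_etaHist_fullWashStrategy (hx : 0 ≤ x) (hr : ∀ t, 0 ≤ r t) (hβ0 : 0 ≤ β)
    (hβ1 : β ≤ 1) (T : ℕ) (hT : ∀ i j, N i T j = 0) (hX : 0 ≤ wealth0 S r N x T) :
    (1 - β) ^ T * wealth0 S r N x T ≤ etaHist β x S r (fullWashStrategy β x S r N) T T := by
  obtain ⟨hμ1, hμ⟩ := fullWash_mu_mem β x S r N hβ0 hβ1 T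
  have hval := add_mu_mul_wealth0_sub_le_fullWashValue β x S r N hx hr hβ0 hβ1 T
  have hliq : dotp (holdings N T) (S T) = 0 := by simp [dotp, holdings, hT]
  rw [fullWashValue, hliq, mul_zero, add_zero, ← bankAccount_fullWashStrategy] at hval
  refine le_trans ?_ hval
  rcases le_total x (wealth0 S r N x T) with h | h <;>
    nlinarith [pow_le_one₀ (by linarith : 0 ≤ 1 - β) (by linarith : 1 - β ≤ 1) (n := T)]

end FullWashBounds

lemma Measurable.dotp {Ω : Type*} {m : MeasurableSpace Ω} {d : ℕ} {f g : Ω → Fin d → ℝ}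
    (hf : Measurable[m] f) (hg : Measurable[m] g) :
    Measurable[m] fun ω => _root_.dotp (f ω) (g ω) :=
  Finset.measurable_sum _ fun _ _ => hf.eval.mul hg.eval

lemma measurable_finPi_iff {Ω : Type*} {m : MeasurableSpace Ω} {d : ℕ} {f : Ω → Fin d → ℝ} :
    Measurable[m] f ↔ ∀ j, Measurable[m] fun ω => f ω j :=
  measurable_pi_iff

namespace Market

variable (M : Market Ω T d) (β x : ℝ) (N : ℕ → ℕ → Ω → Fin d → ℝ)

def fullWash (t : ℕ) (ω : Ω) : FullWashState :=
  _root_.fullWash β x (fun u => M.S u ω) (fun u => M.r u ω) (fun i u => N i u ω) t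

def fullWashStrategy : ℕ → ℕ → Ω → Fin d → ℝ :=
  fun i t ω => _root_.fullWashStrategy β x (fun u => M.S u ω) (fun u => M.r u ω)
    (fun i u => N i u ω) i t

variable {M N}

lemma IsStrategy.const_mul (hN : M.IsStrategy N) {κ : ℝ} (hκ : 0 ≤ κ) :
    M.IsStrategy fun i t ω j => κ * N i t ω j := by
  obtain ⟨hmeas, hnonneg, hanti, hT, hbefore⟩ := hN
  refine ⟨fun i t => measurable_finPi_iff.mpr fun j =>
      (measurable_finPi_iff.mp (hmeas i t) j).const_mul κ,
    fun i t ω j => mul_nonneg hκ (hnonneg i t ω j),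
    fun i t hit htT ω j => mul_le_mul_of_nonneg_left (hanti i t hit htT ω j) hκ,
    fun i ω j => by simp [hT], fun i t hti ω _ => by simp [hbefore i t hti]⟩

lemma measurable_holdings (hN : ∀ i t, Measurable[M.F t] (N i t)) {t v : ℕ} (htv : t ≤ v) :
    Measurable[M.F v] fun ω => holdings (fun i u => N i u ω) t :=
  measurable_finPi_iff.mpr fun j => Finset.measurable_sum _ fun i _ =>
    (measurable_finPi_iff.mp (hN i t) j).mono (M.F_mono htv) le_rfl

lemma measurable_dotp_holdings (hN : ∀ i t, Measurable[M.F t] (N i t)) {t u v : ℕ}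
    (htv : t ≤ v) (huv : u ≤ v) :
    Measurable[M.F v] fun ω => dotp (holdings (fun i u => N i u ω) t) (M.S u ω) :=
  (measurable_holdings hN htv).dotp ((M.S_adapted u).mono (M.F_mono huv) le_rfl)

lemma measurable_fullWash (hN : ∀ i t, Measurable[M.F t] (N i t)) (t : ℕ) :
    Measurable[M.F t] (fun ω => (M.fullWash β x N t ω).mu)
      ∧ Measurable[M.F t] (fun ω => (M.fullWash β x N t ω).G)
      ∧ Measurable[M.F t] (fun ω => (M.fullWash β x N t ω).Gam)
      ∧ Measurable[M.F t] (fun ω => (M.fullWash β x N t ω).eta) := by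
  induction t with
  | zero => exact ⟨measurable_const, measurable_const, measurable_const,
      measurable_const.sub (measurable_dotp_holdings hN le_rfl le_rfl)⟩
  | succ t ih =>
    have hle : M.F t ≤ M.F (t + 1) := M.F_mono t.le_succ
    obtain ⟨hμ, hG, hΓ, hη⟩ := ih
    replace hμ := hμ.mono hle le_rfl
    replace hG := hG.mono hle le_rfl
    replace hΓ := hΓ.mono hle le_rfl
    replace hη := hη.mono hle le_rfl
    have hr := M.r_adapted (t + 1)
    have hG' : Measurable[M.F (t + 1)] fun ω => (M.fullWash β x N (t + 1) ω).G :=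
      (hG.add (hη.mul hr)).add
        (hμ.mul ((measurable_dotp_holdings hN t.le_succ le_rfl).sub
          (measurable_dotp_holdings hN t.le_succ t.le_succ)))
    have hΓ' : Measurable[M.F (t + 1)] fun ω => (M.fullWash β x N (t + 1) ω).Gam := hΓ.max hG'
    have hμ' : Measurable[M.F (t + 1)] fun ω => (M.fullWash β x N (t + 1) ω).mu :=
      Measurable.ite (measurableSet_lt hΓ hG') (measurable_const.mul hμ) hμ
    refine ⟨hμ', hG', hΓ', ?_⟩
    exact ((hη.add (hr.mul hη)).add
      ((hμ.mul (measurable_dotp_holdings hN t.le_succ le_rfl)).sub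
        (hμ'.mul (measurable_dotp_holdings hN le_rfl le_rfl)))).sub
      ((measurable_const.mul hΓ').sub (measurable_const.mul hΓ))

lemma isStrategy_fullWashStrategy (hβ0 : 0 ≤ β) (hβ1 : β ≤ 1) (hN : M.IsStrategy N) :
    M.IsStrategy (M.fullWashStrategy β x N) := by
  obtain ⟨hmeas, hnonneg, -, hT, -⟩ := hN
  have hμ : ∀ t ω, 0 ≤ (M.fullWash β x N t ω).mu := fun t ω =>
    (pow_nonneg (by linarith) t).trans (fullWash_mu_mem β x _ _ _ hβ0 hβ1 t).1
  have hpos : ∀ i t ω j, 0 ≤ M.fullWashStrategy β x N i t ω j := by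
    intro i t ω j
    unfold fullWashStrategy _root_.fullWashStrategy
    split_ifs
    · exact mul_nonneg (hμ t ω) (Finset.sum_nonneg fun i _ => hnonneg i t ω j)
    · rfl
  refine ⟨fun i t => measurable_finPi_iff.mpr fun j => ?_, hpos, fun i t hit _ ω j => ?_,
    fun i ω j => ?_, fun i t hti ω j => if_neg (by omega)⟩
  · by_cases hit : i = t
    · simp only [fullWashStrategy, _root_.fullWashStrategy, if_pos hit]
      exact (measurable_fullWash β x hmeas t).1.mul
        (measurable_finPi_iff.mp (measurable_holdings hmeas le_rfl) j)
    · simp only [fullWashStrategy, _root_.fullWashStrategy, if_neg hit]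
      exact measurable_const
  · have hsold : M.fullWashStrategy β x N i (t + 1) ω j = 0 := if_neg (by omega)
    exact hsold ▸ hpos i t ω j
  · simp [fullWashStrategy, _root_.fullWashStrategy, holdings, hT]

end Market

namespace Market

variable {M : Market Ω T d}

/-- The witness is the full-wash strategy built on `x₀ / (2x)` times `N`: it trades with only half
of `x₀`, and the other half grows in the bank account. -/
theorem exists_isStrategy_affine_le_V {α β x x₀ : ℝ} (hα : 0 ≤ α) (hβ0 : 0 ≤ β) (hβ1 : β ≤ 1)
    (hx : 0 < x) (hx₀ : 0 < x₀) {N : ℕ → ℕ → Ω → Fin d → ℝ} (hN : M.IsStrategy N) :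
    ∃ N', M.IsStrategy N' ∧ ∀ ω, 0 ≤ M.V α x N ω →
      (1 - β) ^ T * (x₀ / (2 * x)) * M.V α x N ω + (1 - β) ^ T * (x₀ / 2) ≤ M.V β x₀ N' ω := by
  set κ := x₀ / (2 * x)
  have hκ : 0 ≤ κ := by positivity
  refine ⟨M.fullWashStrategy β x₀ fun i t ω j => κ * N i t ω j,
    isStrategy_fullWashStrategy β x₀ hβ0 hβ1 (hN.const_mul hκ), fun ω hV => ?_⟩
  have hr : ∀ t, 0 ≤ M.r t ω := fun t => M.r_nonneg t ω
  have hT : ∀ i j, N i T ω j = 0 := fun i j => hN.2.2.2.1 i ω j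
  have hVY : M.V α x N ω ≤ wealth0 (fun t => M.S t ω) (fun t => M.r t ω) (fun i t => N i t ω) x T :=
    etaHist_le_wealth0 x _ _ _ hα hr T hT
  have hB := one_le_compounding _ hr T
  have hscaled := wealth0_const_mul x (fun t => M.S t ω) (fun t => M.r t ω) (fun i t => N i t ω)
    κ x₀ T
  rw [show x₀ - κ * x = x₀ / 2 by simp only [κ]; field_simp; ring] at hscaled
  have hq : 0 ≤ (1 - β) ^ T := pow_nonneg (by linarith) T
  have hκV := mul_le_mul_of_nonneg_left hVY hκ
  have hX :
      0 ≤ wealth0 (fun t => M.S t ω) (fun t => M.r t ω) (fun i t j => κ * N i t ω j) x₀ T := by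
    nlinarith [mul_nonneg hκ hV]
  calc (1 - β) ^ T * κ * M.V α x N ω + (1 - β) ^ T * (x₀ / 2)
      ≤ (1 - β) ^ T * wealth0 (fun t => M.S t ω) (fun t => M.r t ω)
          (fun i t j => κ * N i t ω j) x₀ T := by
        rw [hscaled]
        nlinarith [mul_le_mul_of_nonneg_left hB (by positivity : 0 ≤ x₀ / 2)]
    _ ≤ M.V β x₀ (M.fullWashStrategy β x₀ fun i t ω j => κ * N i t ω j) ω :=
        mul_wealth0_le_etaHist_fullWashStrategy β x₀ _ _ _ hx₀.le hr hβ0 hβ1 T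
          (fun i j => by simp [hT]) hX

end Market

lemma ConcaveOn.le_add_mul {s : Set ℝ} {f : ℝ → ℝ} (hf : ConcaveOn ℝ s f) {p δ k : ℝ}
    (hp : p ∈ s) (hk : 1 ≤ k) (hz : p + k * δ ∈ s) :
    f (p + k * δ) ≤ f p + k * (f (p + δ) - f p) := by
  have hk0 : 0 < k := by linarith
  have hconc := hf.2 hp hz (sub_nonneg.mpr (inv_le_one_of_one_le₀ hk) : 0 ≤ 1 - k⁻¹)
    (inv_nonneg.mpr hk0.le) (sub_add_cancel 1 k⁻¹)
  have hm : (1 - k⁻¹) • p + k⁻¹ • (p + k * δ) = p + δ := by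
    simp only [smul_eq_mul]
    field_simp
    ring
  rw [hm, smul_eq_mul, smul_eq_mul] at hconc
  have := mul_le_mul_of_nonneg_left hconc hk0.le
  field_simp at this
  linarith

namespace UtilityFun

variable (Uf : UtilityFun)

lemma U_zero_le {z : ℝ} (hz : 0 < z) : Uf.U 0 ≤ Uf.u z := by
  refine le_of_tendsto Uf.zero_lim ?_
  filter_upwards [Ioo_mem_nhdsGT hz] with y hy
  rw [Uf.pos_real y hy.1]
  exact_mod_cast Uf.mono hy.1 hz hy.2.le

lemma monotoneOn_U : MonotoneOn Uf.U (Set.Ici 0) := by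
  intro v hv z hz hvz
  rcases (Set.mem_Ici.mp hv).eq_or_lt with rfl | hv
  · rcases (Set.mem_Ici.mp hz).eq_or_lt with rfl | hz
    · rfl
    · exact (Uf.U_zero_le hz).trans_eq (Uf.pos_real z hz).symm
  · rw [Uf.pos_real v hv, Uf.pos_real z (hv.trans_le hvz)]
    exact_mod_cast Uf.mono hv (hv.trans_le hvz) hvz

/-- Extrapolate the chord of `u` from `ε` to `ε + c z`; the base point `ε > 0` is needed because `u`
may be unbounded below at `0`. -/
lemma exists_U_le_affine {c ε : ℝ} (hc : 0 < c) (hε : 0 < ε) :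
    ∃ a b : ℝ, 0 ≤ a ∧ ∀ z w : ℝ, 0 ≤ z → c * z + ε ≤ w →
      Uf.U z ≤ ((a * Uf.u w + b : ℝ) : EReal) := by
  refine ⟨1 + c⁻¹, c⁻¹ * |Uf.u ε|, by positivity, fun z w hz hw => ?_⟩
  have hm : 0 < c * z + ε := by positivity
  have hextra := Uf.concave.le_add_mul (δ := c * z) hε
    (le_add_of_nonneg_right (inv_nonneg.mpr hc.le)) (by simp only [Set.mem_Ioi]; positivity)
  have hzle : z ≤ ε + (1 + c⁻¹) * (c * z) := by
    rw [add_mul, inv_mul_cancel_left₀ hc.ne']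
    nlinarith
  have hmono := Uf.mono (show (0 : ℝ) < ε + c * z by positivity) (hm.trans_le hw)
    (by linarith : ε + c * z ≤ w)
  have habs := neg_abs_le (Uf.u ε)
  calc Uf.U z ≤ Uf.U (ε + (1 + c⁻¹) * (c * z)) := Uf.monotoneOn_U hz (hz.trans hzle) hzle
    _ = Uf.u (ε + (1 + c⁻¹) * (c * z)) := Uf.pos_real _ (by positivity)
    _ ≤ (1 + c⁻¹) * Uf.u w + c⁻¹ * |Uf.u ε| := by
        have := mul_le_mul_of_nonneg_left hmono (by positivity : 0 ≤ 1 + c⁻¹)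
        have := mul_le_mul_of_nonneg_left habs (by positivity : 0 ≤ c⁻¹)
        exact_mod_cast (by nlinarith : Uf.u (ε + (1 + c⁻¹) * (c * z)) ≤ _)

end UtilityFun

section ExpectedUtility

open scoped ENNReal

lemma erealPos_coe (c : ℝ) : erealPos c = ENNReal.ofReal c := by
  rw [erealPos, if_neg (EReal.coe_ne_top c), EReal.toReal_coe]

lemma erealPos_le_ofReal {y : EReal} {c : ℝ} (h : y ≤ c) : erealPos y ≤ ENNReal.ofReal c := by
  have hy : y ≠ ⊤ := ne_top_of_le_ne_top (EReal.coe_ne_top c) h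
  rw [erealPos, if_neg hy]
  rcases eq_or_ne y ⊥ with rfl | hb
  · simp
  · exact ENNReal.ofReal_le_ofReal (by simpa using EReal.toReal_le_toReal h hb (EReal.coe_ne_top c))

lemma EReal.le_coe_ennreal_ofReal_toReal {y : EReal} (hy : y ≠ ⊤) :
    y ≤ ((ENNReal.ofReal y.toReal : ℝ≥0∞) : EReal) := by
  rw [EReal.coe_ennreal_ofReal]
  exact (EReal.le_coe_toReal hy).trans (by exact_mod_cast le_max_left _ _)

variable {Ω : Type*} [MeasurableSpace Ω] (P : Measure Ω) (Uf : UtilityFun)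

lemma expUtility_le_lintegral (X : Ω → ℝ) :
    expUtility P Uf X ≤ ((∫⁻ ω, erealPos (Uf.U (X ω)) ∂P : ℝ≥0∞) : EReal) := by
  unfold expUtility
  split_ifs with h
  · exact bot_le
  · rw [EReal.sub_le_iff_le_add (.inl (EReal.coe_ennreal_ne_bot _))
      (.inl (EReal.coe_ennreal_eq_top_iff.not.mpr h))]
    exact le_add_of_nonneg_right (EReal.coe_ennreal_nonneg _)

lemma lintegral_erealPos_le_of_expUtility_le {W : Ω → ℝ} {K : EReal}
    (hneg : ∫⁻ ω, erealPos (-Uf.U (W ω)) ∂P ≠ ∞) (hK : expUtility P Uf W ≤ K) (hKtop : K ≠ ⊤) :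
    ∫⁻ ω, erealPos (Uf.U (W ω)) ∂P
      ≤ ENNReal.ofReal K.toReal + ∫⁻ ω, erealPos (-Uf.U (W ω)) ∂P := by
  rw [expUtility, if_neg hneg, EReal.sub_le_iff_le_add (.inl (EReal.coe_ennreal_ne_bot _))
    (.inl (EReal.coe_ennreal_eq_top_iff.not.mpr hneg))] at hK
  rw [← EReal.coe_ennreal_le_coe_ennreal_iff, EReal.coe_ennreal_add]
  exact hK.trans (add_le_add_left (EReal.le_coe_ennreal_ofReal_toReal hKtop) _)

variable [IsProbabilityMeasure P]

lemma lintegral_erealPos_neg_U_le {W : Ω → ℝ} {ε : ℝ} (hε : 0 < ε) (hW : ∀ᵐ ω ∂P, ε ≤ W ω) :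
    ∫⁻ ω, erealPos (-Uf.U (W ω)) ∂P ≤ ENNReal.ofReal |Uf.u ε| := by
  refine (lintegral_mono_ae ?_).trans_eq (by simp : ∫⁻ _, ENNReal.ofReal |Uf.u ε| ∂P = _)
  filter_upwards [hW] with ω hω
  have hWpos := hε.trans_le hω
  rw [Uf.pos_real _ hWpos]
  refine erealPos_le_ofReal ?_
  exact_mod_cast (neg_le_neg (Uf.mono hε hWpos hω)).trans (neg_le_abs _)

lemma lintegral_erealPos_U_le_of_le_affine {X W : Ω → ℝ} {a b : ℝ} (ha : 0 ≤ a)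
    (hW : ∀ᵐ ω ∂P, 0 < W ω) (hXW : ∀ᵐ ω ∂P, Uf.U (X ω) ≤ ((a * Uf.u (W ω) + b : ℝ) : EReal)) :
    ∫⁻ ω, erealPos (Uf.U (X ω)) ∂P
      ≤ ENNReal.ofReal a * ∫⁻ ω, erealPos (Uf.U (W ω)) ∂P + ENNReal.ofReal |b| := by
  calc ∫⁻ ω, erealPos (Uf.U (X ω)) ∂P
      ≤ ∫⁻ ω, (ENNReal.ofReal a * erealPos (Uf.U (W ω)) + ENNReal.ofReal |b|) ∂P := by
        refine lintegral_mono_ae ?_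
        filter_upwards [hW, hXW] with ω hWω hXω
        rw [Uf.pos_real _ hWω, erealPos_coe, ← ENNReal.ofReal_mul ha]
        refine (erealPos_le_ofReal hXω).trans (ENNReal.ofReal_add_le.trans ?_)
        gcongr
        exact le_abs_self b
    _ = _ := by
        rw [lintegral_add_right _ measurable_const, lintegral_const, measure_univ, mul_one,
          lintegral_const_mul' _ _ ENNReal.ofReal_ne_top]

lemma expUtility_le_of_le_affine {X W : Ω → ℝ} {a b ε : ℝ} {K : EReal} (ha : 0 ≤ a) (hε : 0 < ε)
    (hW : ∀ᵐ ω ∂P, ε ≤ W ω) (hXW : ∀ᵐ ω ∂P, Uf.U (X ω) ≤ ((a * Uf.u (W ω) + b : ℝ) : EReal))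
    (hK : expUtility P Uf W ≤ K) (hKtop : K ≠ ⊤) :
    expUtility P Uf X ≤ ((ENNReal.ofReal a * (ENNReal.ofReal K.toReal + ENNReal.ofReal |Uf.u ε|)
      + ENNReal.ofReal |b| : ℝ≥0∞) : EReal) := by
  have hneg := lintegral_erealPos_neg_U_le P Uf hε hW
  have hpos := (lintegral_erealPos_le_of_expUtility_le P Uf
    (ne_top_of_le_ne_top ENNReal.ofReal_ne_top hneg) hK hKtop).trans (add_le_add_right hneg _)
  refine (expUtility_le_lintegral P Uf X).trans (EReal.coe_ennreal_le_coe_ennreal_iff.mpr ?_)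
  exact (lintegral_erealPos_U_le_of_le_affine P Uf ha (hW.mono fun ω h => hε.trans_le h) hXW).trans
    (by gcongr)

end ExpectedUtility

/-- If the value function is finite for some tax rate `α₀ ∈ [0,1)` and some
initial capital `x₀ > 0`, then it is finite for every tax rate `α ∈ [0,1)` and every
initial capital `x > 0`. -/
theorem valueFn_finite_all_of_finite_one
    (M : Market Ω T d) (Uf : UtilityFun) (α₀ x₀ : ℝ)
    (hα₀0 : 0 ≤ α₀) (hα₀1 : α₀ < 1) (hx₀ : 0 < x₀)
    (h : M.valueFn Uf α₀ x₀ < ⊤) :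
    ∀ α : ℝ, 0 ≤ α → α < 1 → ∀ x : ℝ, 0 < x → M.valueFn Uf α x < ⊤ := by
  intro α hα0 _ x hx
  have := M.hProb
  have hq : 0 < (1 - α₀) ^ T := pow_pos (by linarith) T
  set c := (1 - α₀) ^ T * (x₀ / (2 * x))
  set ε := (1 - α₀) ^ T * (x₀ / 2)
  have hc : 0 < c := by positivity
  have hε : 0 < ε := by positivity
  obtain ⟨a, b, ha, hUab⟩ := Uf.exists_U_le_affine hc hε
  let C : ENNReal := ENNReal.ofReal a
    * (ENNReal.ofReal (M.valueFn Uf α₀ x₀).toReal + ENNReal.ofReal |Uf.u ε|) + ENNReal.ofReal |b|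
  have hC : (C : EReal) < ⊤ :=
    lt_top_iff_ne_top.mpr (EReal.coe_ennreal_eq_top_iff.not.mpr (by finiteness))
  refine lt_of_le_of_lt (iSup₂_le fun N ⟨hN, hNadm⟩ => ?_) hC
  obtain ⟨N', hN', hdom⟩ := M.exists_isStrategy_affine_le_V hα0 hα₀0 hα₀1.le hx hx₀ hN
  have hW : ∀ᵐ ω ∂M.P, ε ≤ M.V α₀ x₀ N' ω := hNadm.mono fun ω hV =>
    le_add_of_nonneg_left (mul_nonneg hc.le hV) |>.trans (hdom ω hV)
  have hN'adm : ∀ᵐ ω ∂M.P, 0 ≤ M.V α₀ x₀ N' ω := hW.mono fun ω hω => hε.le.trans hω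
  exact expUtility_le_of_le_affine M.P Uf ha hε hW (hNadm.mono fun ω hV => hUab _ _ hV (hdom ω hV))
    (le_iSup₂ (f := fun N _ => expUtility M.P Uf fun ω => M.V α₀ x₀ N ω) N' ⟨hN', hN'adm⟩) h.ne

end
end

section
/- Let K : Ω ⇉ ℝ^d be a compact-valued ℱ_t-measurable random set with 0 ∈ K(ω) for all ω and dim(K) ≤ k almost surely, where k ∈ {0,…,d}. Then there exist ℱ_t-measurable random vectors Y¹,…,Y^k with Y^i(ω) ∈ K(ω) for all ω ∈ Ω, i = 1,…,k, such that for every Y ∈ L^0(ℱ_t; K) there exist ℱ_t-measurable random variables λ_i taking values in [−2^{i−1}, 2^{i−1}], i = 1,…,k, with Y = Σ_{i=1}^k λ_i Y^i almost surely. -/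
open MeasureTheory Filter Finset

noncomputable section
open scoped Classical

variable {Ω : Type*} [m0 : MeasurableSpace Ω] {T d : ℕ}

variable {Ω : Type*} [m0 : MeasurableSpace Ω] {T d : ℕ}

/-!
Choose `W₀, W₁, …` greedily in `K ω`: `W_j` maximises the distance to
`V_j = span (W₀, …, W_{j-1})`. Such maximisers can be selected measurably: cutting a compact
random set down by a countable separating family of closed sets leaves a single point, which is a
measurable selection; dense sequences of such selections then make the set of maximisers of a
Carathéodory function again a compact random set.

Since `dim K ω ≤ k`, the greedy choice exhausts `K ω ⊆ V_k`. Write `z ∈ V_{j+1}` as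
`t • W_j + v` with `v ∈ V_j`; the distance to `V_j` is then `|t|` times that of `W_j`, which is
maximal, so `|t| ≤ 1`. Removing `t • W_j` at most doubles the bounds on the distances to the lower
`V_i`, hence the coefficient of `W_j` is at most `2 ^ (k - 1 - j)`. Measurable coefficients are
finally a measurable maximiser of `-‖Z - ∑ λ_i • Y_i‖` over the box of admissible `λ`.
-/

open Set Topology TopologicalSpace Metric

section RandomSet

theorem iInter_subsingleton_of_separating {α : Type*} {S : ℕ → Set α}
    (hS : ∀ x y, (∀ n, x ∈ S n ↔ y ∈ S n) → x = y) {F : ℕ → Set α}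
    (hF : ∀ n, F (n + 1) = if (F n ∩ S n).Nonempty then F n ∩ S n else F n) :
    (⋂ n, F n).Subsingleton := by
  have key : ∀ n x y, x ∈ ⋂ n, F n → y ∈ ⋂ n, F n → x ∈ S n → y ∈ S n := fun n x y hx hy hxS => by
    have hy' := mem_iInter.1 hy (n + 1)
    rw [hF, if_pos ⟨x, mem_iInter.1 hx n, hxS⟩] at hy'
    exact hy'.2
  exact fun x hx y hy => hS x y fun n => ⟨key n x y hx hy, key n y x hy hx⟩

variable {X : Type*} [TopologicalSpace X]

structure IsNonemptyCompactRandomSet (K : Ω → Set X) : Prop where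
  measurableSet_inter_nonempty : ∀ C, IsClosed C → MeasurableSet {ω | (K ω ∩ C).Nonempty}
  isCompact : ∀ ω, IsCompact (K ω)
  nonempty : ∀ ω, (K ω).Nonempty

theorem isNonemptyCompactRandomSet_of_isOpen [PseudoMetrizableSpace X] {K : Ω → Set X}
    (hK : ∀ O, IsOpen O → MeasurableSet {ω | (K ω ∩ O).Nonempty})
    (hc : ∀ ω, IsCompact (K ω)) (hne : ∀ ω, (K ω).Nonempty) :
    IsNonemptyCompactRandomSet K := by
  let := pseudoMetrizableSpacePseudoMetric X
  refine ⟨fun C hC => ?_, hc, hne⟩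
  have : {ω | (K ω ∩ C).Nonempty} = ⋂ n : ℕ, {ω | (K ω ∩ thickening (1 / (n + 1)) C).Nonempty} := by
    refine Subset.antisymm (fun ω hω => mem_iInter.2 fun n =>
      hω.mono (inter_subset_inter_right _ (self_subset_thickening (by positivity) C))) ?_
    intro ω hω
    by_contra hdisj
    obtain ⟨δ, hδ, hδK⟩ := (disjoint_iff_inter_eq_empty.2 (not_nonempty_iff_eq_empty.1 hdisj)
      |>.exists_thickenings (hc ω) hC)
    obtain ⟨n, hn⟩ := exists_nat_one_div_lt hδ
    obtain ⟨y, hyK, hyC⟩ := mem_iInter.1 hω n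
    exact hδK.ne_of_mem (self_subset_thickening hδ _ hyK) (thickening_mono hn.le C hyC) rfl
  rw [this]
  exact .iInter fun n => hK _ isOpen_thickening

theorem exists_seq_isClosed_subset_of_mem_nhds [SecondCountableTopology X] [RegularSpace X] :
    ∃ B : ℕ → Set X, (∀ n, IsClosed (B n)) ∧ ∀ x, ∀ U ∈ 𝓝 x, ∃ n, x ∈ B n ∧ B n ⊆ U := by
  obtain ⟨b, hbc, -, hb⟩ := exists_countable_basis X
  obtain ⟨B, hB⟩ := ((hbc.image closure).insert ∅).exists_eq_range (insert_nonempty _ _)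
  refine ⟨B, fun n => ?_, fun x U hU => ?_⟩
  · have : B n ∈ insert ∅ (closure '' b) := hB ▸ mem_range_self n
    rcases this with h | ⟨t, -, h⟩
    · exact h ▸ isClosed_empty
    · exact h ▸ isClosed_closure
  · obtain ⟨V, hV, hVc, hVU⟩ := exists_mem_nhds_isClosed_subset hU
    obtain ⟨t, htb, hxt, htV⟩ := hb.mem_nhds_iff.1 hV
    obtain ⟨n, hn⟩ : closure t ∈ range B := hB ▸ mem_insert_of_mem _ (mem_image_of_mem _ htb)
    exact ⟨n, hn ▸ subset_closure hxt, hn ▸ (closure_minimal htV hVc).trans hVU⟩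

theorem ciSup_comp_eq_of_isMaxOn {K : Set X} {g : X → ℝ} (hg : Continuous g) {u : ℕ → X}
    (hu : ∀ n, u n ∈ K) (hKu : K ⊆ closure (range u)) {y : X} (hy : y ∈ K)
    (hmax : IsMaxOn g K y) : ⨆ n, g (u n) = g y := by
  have hbdd : BddAbove (range fun n => g (u n)) := ⟨g y, forall_mem_range.2 fun n => hmax (hu n)⟩
  refine le_antisymm (ciSup_le fun n => hmax (hu n)) ?_
  have : g y ∈ closure (range fun n => g (u n)) := by
    rw [range_comp' g u]
    exact image_closure_subset_closure_image hg ⟨y, hKu hy, rfl⟩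
  exact closure_minimal (range_subset_iff.2 fun n => le_ciSup hbdd n) isClosed_Iic this

namespace IsNonemptyCompactRandomSet

variable {K : Ω → Set X}

theorem restrict (hK : IsNonemptyCompactRandomSet K) {C : Set X} (hC : IsClosed C) :
    IsNonemptyCompactRandomSet fun ω => if (K ω ∩ C).Nonempty then K ω ∩ C else K ω where
  measurableSet_inter_nonempty D hD := by
    convert (hK.measurableSet_inter_nonempty C hC).ite
      (hK.measurableSet_inter_nonempty (C ∩ D) (hC.inter hD))
      (hK.measurableSet_inter_nonempty D hD) using 1
    ext ω
    by_cases h : (K ω ∩ C).Nonempty <;> simp [Set.ite, h, inter_assoc]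
  isCompact ω := by
    split_ifs
    exacts [(hK.isCompact ω).inter_right hC, hK.isCompact ω]
  nonempty ω := by
    split_ifs with h
    exacts [h, hK.nonempty ω]

theorem exists_measurable_selection [T2Space X] [HasCountableSeparatingOn X IsClosed univ]
    [MeasurableSpace X] [BorelSpace X] (hK : IsNonemptyCompactRandomSet K) :
    ∃ f : Ω → X, Measurable f ∧ ∀ ω, f ω ∈ K ω := by
  obtain ⟨S, hSc, hS⟩ := exists_seq_separating X isClosed_univ univ
  let F : ℕ → Ω → Set X := fun n => Nat.rec K
    (fun n Fn ω => if (Fn ω ∩ S n).Nonempty then Fn ω ∩ S n else Fn ω) n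
  have hF : ∀ n, IsNonemptyCompactRandomSet (F n) := fun n =>
    Nat.rec hK (fun n ih => ih.restrict (hSc n)) n
  have hanti : ∀ n ω, F (n + 1) ω ⊆ F n ω := fun n ω => by
    dsimp only [F]; split_ifs; exacts [inter_subset_left, subset_rfl]
  have hinter : ∀ ω C, IsClosed C → (∀ n, (F n ω ∩ C).Nonempty) → (⋂ n, F n ω ∩ C).Nonempty :=
    fun ω C hC h => IsCompact.nonempty_iInter_of_sequence_nonempty_isCompact_isClosed _
      (fun n => inter_subset_inter_left _ (hanti n ω)) h (((hF 0).isCompact ω).inter_right hC)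
      (fun n => ((hF n).isCompact ω).isClosed.inter hC)
  have hne : ∀ ω, (⋂ n, F n ω).Nonempty := fun ω => by
    simpa using hinter ω univ isClosed_univ (by simpa using fun n => (hF n).nonempty ω)
  have hsub : ∀ ω, (⋂ n, F n ω).Subsingleton := fun ω =>
    iInter_subsingleton_of_separating (fun x y h => hS x trivial y trivial h) (fun n => rfl)
  choose f hf using hne
  refine ⟨f, measurable_of_isClosed fun C hC => ?_, fun ω => mem_iInter.1 (hf ω) 0⟩
  have : f ⁻¹' C = ⋂ n, {ω | (F n ω ∩ C).Nonempty} := by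
    ext ω
    simp only [Set.mem_preimage, mem_iInter]
    refine ⟨fun h n => ⟨f ω, mem_iInter.1 (hf ω) n, h⟩, fun h => ?_⟩
    obtain ⟨y, hy⟩ := hinter ω C hC h
    rw [hsub ω (hf ω) (mem_iInter.2 fun n => (mem_iInter.1 hy n).1)]
    exact (mem_iInter.1 hy 0).2
  rw [this]
  exact .iInter fun n => (hF n).measurableSet_inter_nonempty C hC

theorem exists_measurable_dense_selections [SecondCountableTopology X] [RegularSpace X] [T2Space X]
    [MeasurableSpace X] [BorelSpace X] (hK : IsNonemptyCompactRandomSet K) :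
    ∃ f : ℕ → Ω → X, (∀ n, Measurable (f n)) ∧ (∀ n ω, f n ω ∈ K ω) ∧
      ∀ ω, K ω ⊆ closure (range fun n => f n ω) := by
  obtain ⟨B, hBc, hB⟩ := exists_seq_isClosed_subset_of_mem_nhds (X := X)
  choose f hfm hf using fun n => (hK.restrict (hBc n)).exists_measurable_selection
  refine ⟨f, hfm, fun n ω => ?_, fun ω y hy => mem_closure_iff.2 fun U hU hyU => ?_⟩
  · have := hf n ω
    split_ifs at this
    exacts [this.1, this]
  · obtain ⟨n, hyn, hnU⟩ := hB y U (hU.mem_nhds hyU)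
    have := hf n ω
    rw [if_pos ⟨y, hy, hyn⟩] at this
    exact ⟨f n ω, hnU this.2, n, rfl⟩

theorem argmax [MetrizableSpace X] [SecondCountableTopology X] [MeasurableSpace X] [BorelSpace X]
    (hK : IsNonemptyCompactRandomSet K) {g : Ω → X → ℝ} (hgc : ∀ ω, Continuous (g ω))
    (hgm : ∀ y, Measurable fun ω => g ω y) :
    IsNonemptyCompactRandomSet fun ω => {y ∈ K ω | IsMaxOn (g ω) (K ω) y} where
  isCompact ω := by
    have : {y | IsMaxOn (g ω) (K ω) y} = ⋂ y' ∈ K ω, {y | g ω y' ≤ g ω y} := by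
      ext; simp [isMaxOn_iff]
    change IsCompact (K ω ∩ {y | IsMaxOn (g ω) (K ω) y})
    rw [this]
    exact (hK.isCompact ω).inter_right
      (isClosed_biInter fun y' _ => isClosed_le continuous_const (hgc ω))
  nonempty ω := (hK.isCompact ω).exists_isMaxOn (hK.nonempty ω) (hgc ω).continuousOn
  measurableSet_inter_nonempty C hC := by
    have hg : Measurable (Function.uncurry fun y ω => g ω y) :=
      measurable_uncurry_of_continuous_of_measurable hgc hgm
    have hsup : ∀ w : ℕ → Ω → X, (∀ n, Measurable (w n)) →
        Measurable fun ω => ⨆ n, g ω (w n ω) := fun w hw =>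
      .iSup fun n => hg.comp ((hw n).prodMk measurable_id)
    obtain ⟨u, hum, hu, hKu⟩ := hK.exists_measurable_dense_selections
    obtain ⟨v, hvm, hv, hKv⟩ := (hK.restrict hC).exists_measurable_dense_selections
    -- The maximisers meet `C` iff the maximum over `K ω ∩ C` reaches the maximum over `K ω`,
    -- and both maxima are suprema along dense selections.
    convert (hK.measurableSet_inter_nonempty C hC).inter
      (measurableSet_le (hsup u hum) (hsup v hvm)) using 1
    ext ω
    obtain ⟨y₀, hy₀, hmax₀⟩ := (hK.isCompact ω).exists_isMaxOn (hK.nonempty ω) (hgc ω).continuousOn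
    have hsupv : (K ω ∩ C).Nonempty → ∃ y₁ ∈ K ω ∩ C,
        IsMaxOn (g ω) (K ω ∩ C) y₁ ∧ ⨆ n, g ω (v n ω) = g ω y₁ := fun hKC => by
      obtain ⟨y₁, hy₁, hmax₁⟩ :=
        ((hK.isCompact ω).inter_right hC).exists_isMaxOn hKC (hgc ω).continuousOn
      have hv' := fun n => hv n ω
      have hKv' := hKv ω
      simp only [if_pos hKC] at hv' hKv'
      exact ⟨y₁, hy₁, hmax₁, ciSup_comp_eq_of_isMaxOn (hgc ω) hv' hKv' hy₁ hmax₁⟩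
    simp only [mem_ofPred_eq, mem_inter_iff,
      ciSup_comp_eq_of_isMaxOn (hgc ω) (hu · ω) (hKu ω) hy₀ hmax₀]
    constructor
    · rintro ⟨y, ⟨hyK, hymax⟩, hyC⟩
      obtain ⟨y₁, -, hmax₁, hv₁⟩ := hsupv ⟨y, hyK, hyC⟩
      exact ⟨⟨y, hyK, hyC⟩, hv₁ ▸ (hymax hy₀).trans (hmax₁ ⟨hyK, hyC⟩)⟩
    · rintro ⟨hKC, hle⟩
      obtain ⟨y₁, hy₁, -, hv₁⟩ := hsupv hKC
      exact ⟨y₁, ⟨hy₁.1, fun y' hy' => (hmax₀ hy').trans (hv₁ ▸ hle)⟩, hy₁.2⟩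

theorem exists_measurable_isMaxOn [MetrizableSpace X] [SecondCountableTopology X]
    [MeasurableSpace X] [BorelSpace X] (hK : IsNonemptyCompactRandomSet K) {g : Ω → X → ℝ}
    (hgc : ∀ ω, Continuous (g ω)) (hgm : ∀ y, Measurable fun ω => g ω y) :
    ∃ W : Ω → X, Measurable W ∧ ∀ ω, W ω ∈ K ω ∧ IsMaxOn (g ω) (K ω) (W ω) :=
  (hK.argmax hgc hgm).exists_measurable_selection

end IsNonemptyCompactRandomSet

end RandomSet

theorem infDist_range_eq_iInf_comp {M α β : Type*} [PseudoMetricSpace M] [Nonempty α]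
    [TopologicalSpace β] {f : β → M} (hf : Continuous f) {q : α → β} (hq : DenseRange q) (y : M) :
    infDist y (Set.range f) = ⨅ a, dist y (f (q a)) := by
  have hsub : Set.range f ⊆ closure (Set.range (f ∘ q)) := by
    rw [Set.range_comp, ← image_univ, ← hq.closure_range]
    exact image_closure_subset_closure_image hf
  have hinf : ⨅ a, dist y (f (q a)) = infDist y (Set.range (f ∘ q)) := by
    rw [infDist_eq_iInf, iInf_range' (fun z => dist y z) (f ∘ q)]
    rfl
  rw [hinf]
  refine le_antisymm ?_ ?_
  · exact infDist_le_infDist_of_subset (range_comp_subset_range q f) (range_nonempty _)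
  · rw [← infDist_closure]
    exact infDist_le_infDist_of_subset hsub ((range_nonempty _).mono (range_comp_subset_range q f))

section Greedy

variable {E : Type*} [NormedAddCommGroup E] [NormedSpace ℝ E]

def spanBelow (w : ℕ → E) (j : ℕ) : Submodule ℝ E := Submodule.span ℝ (w '' Set.Iio j)

theorem spanBelow_eq_span_range (w : ℕ → E) (j : ℕ) :
    spanBelow w j = Submodule.span ℝ (Set.range fun l : Fin j => w l) := by
  rw [spanBelow, ← Fin.range_val, ← Set.range_comp]
  rfl

theorem spanBelow_mono (w : ℕ → E) : Monotone (spanBelow w) := fun _ _ h =>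
  Submodule.span_mono (image_mono (Set.Iio_subset_Iio h))

theorem spanBelow_congr {w w' : ℕ → E} {j : ℕ} (h : ∀ l < j, w l = w' l) :
    spanBelow w j = spanBelow w' j := by
  rw [spanBelow, spanBelow, image_congr (s := Set.Iio j) fun l hl => h l hl]

theorem mem_spanBelow_succ {w : ℕ → E} {j : ℕ} {z : E} :
    z ∈ spanBelow w (j + 1) ↔ ∃ t : ℝ, ∃ v ∈ spanBelow w j, z = t • w j + v := by
  rw [spanBelow, ← Order.succ_eq_add_one, Order.Iio_succ_eq_insert, image_insert_eq,
    Submodule.mem_span_insert]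
  rfl

theorem norm_quotient_mk_eq_infDist (V : Submodule ℝ E) (x : E) :
    ‖(Submodule.Quotient.mk x : E ⧸ V)‖ = infDist x V :=
  QuotientAddGroup.norm_mk (S := V.toAddSubgroup) x

theorem infDist_sub_smul_le (V : Submodule ℝ E) (x y : E) (t : ℝ) :
    infDist (x - t • y) V ≤ infDist x V + |t| * infDist y V := by
  simp only [← norm_quotient_mk_eq_infDist, Submodule.Quotient.mk_sub, Submodule.Quotient.mk_smul]
  exact (norm_sub_le _ _).trans_eq (by rw [norm_smul, Real.norm_eq_abs])

theorem infDist_smul_add_of_mem {V : Submodule ℝ E} {v : E} (hv : v ∈ V) (t : ℝ) (y : E) :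
    infDist (t • y + v) V = |t| * infDist y V := by
  simp only [← norm_quotient_mk_eq_infDist, Submodule.Quotient.mk_add, Submodule.Quotient.mk_smul,
    (Submodule.Quotient.mk_eq_zero V).2 hv, add_zero, norm_smul, Real.norm_eq_abs]

def IsGreedyFarthest (S : Set E) (w : ℕ → E) (k : ℕ) : Prop :=
  ∀ j < k, w j ∈ S ∧ IsMaxOn (fun y => infDist y (spanBelow w j)) S (w j)

theorem IsGreedyFarthest.mono {S : Set E} {w : ℕ → E} {k k' : ℕ} (hw : IsGreedyFarthest S w k')
    (hk : k ≤ k') : IsGreedyFarthest S w k :=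
  fun j hj => hw j (hj.trans_le hk)

variable [FiniteDimensional ℝ E]

theorem exists_abs_le_sub_smul_mem_spanBelow {w : ℕ → E} {k : ℕ} {z : E} {c : ℝ} (hc : 0 ≤ c)
    (hz : z ∈ spanBelow w (k + 1))
    (hzk : infDist z (spanBelow w k) ≤ c * infDist (w k) (spanBelow w k)) :
    ∃ t : ℝ, |t| ≤ c ∧ z - t • w k ∈ spanBelow w k := by
  obtain ⟨t, v, hv, rfl⟩ := mem_spanBelow_succ.1 hz
  by_cases hw : w k ∈ spanBelow w k
  · exact ⟨0, by simpa using hc, by simpa using add_mem (Submodule.smul_mem _ t hw) hv⟩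
  refine ⟨t, ?_, by simpa using hv⟩
  have hpos : 0 < infDist (w k) (spanBelow w k) :=
    ((Submodule.closed_of_finiteDimensional _).notMem_iff_infDist_pos ⟨0, zero_mem _⟩).1 hw
  rw [infDist_smul_add_of_mem hv] at hzk
  exact le_of_mul_le_mul_right hzk hpos

theorem IsGreedyFarthest.exists_sum_smul_eq_of_infDist_le {S : Set E} {w : ℕ → E} :
    ∀ {k : ℕ}, IsGreedyFarthest S w k → ∀ {z : E} {c : ℝ}, 0 ≤ c → z ∈ spanBelow w k →
      (∀ j < k, infDist z (spanBelow w j) ≤ c * infDist (w j) (spanBelow w j)) →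
      ∃ μ : ℕ → ℝ, (∀ j < k, |μ j| ≤ c * 2 ^ (k - 1 - j)) ∧
        z = ∑ j ∈ Finset.range k, μ j • w j
  | 0, _, z, c, _, hz, _ => ⟨0, by simp, by simpa [spanBelow] using hz⟩
  | k + 1, hw, z, c, hc, hz, hzj => by
    obtain ⟨t, ht, hzt⟩ := exists_abs_le_sub_smul_mem_spanBelow hc hz (hzj k k.lt_succ_self)
    have hbound : ∀ j < k, infDist (z - t • w k) (spanBelow w j) ≤
        2 * c * infDist (w j) (spanBelow w j) := fun j hj =>
      calc _ ≤ infDist z (spanBelow w j) + |t| * infDist (w k) (spanBelow w j) :=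
            infDist_sub_smul_le _ _ _ _
        _ ≤ c * infDist (w j) (spanBelow w j) + c * infDist (w j) (spanBelow w j) :=
            add_le_add (hzj j (by omega))
              (mul_le_mul ht ((hw j (by omega)).2 (hw k k.lt_succ_self).1) infDist_nonneg hc)
        _ = _ := by ring
    obtain ⟨μ, hμ, hsum⟩ :=
      (hw.mono k.le_succ).exists_sum_smul_eq_of_infDist_le (by positivity) hzt hbound
    refine ⟨Function.update μ k t, fun j hj => ?_, ?_⟩
    · rcases Nat.lt_succ_iff_lt_or_eq.1 hj with hj | rfl
      · rw [Function.update_of_ne hj.ne]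
        calc |μ j| ≤ 2 * c * 2 ^ (k - 1 - j) := hμ j hj
          _ = c * 2 ^ (k + 1 - 1 - j) := by
            rw [show k + 1 - 1 - j = k - 1 - j + 1 by omega, pow_succ]; ring
      · simpa using ht
    · rw [Finset.sum_range_succ, Function.update_self,
        Finset.sum_congr rfl fun j hj => by rw [Function.update_of_ne (Finset.mem_range.1 hj).ne],
        ← hsum, sub_add_cancel]

theorem IsGreedyFarthest.subset_spanBelow {S : Set E} {w : ℕ → E} {k : ℕ}
    (hw : IsGreedyFarthest S w k) (hdim : Module.finrank ℝ (Submodule.span ℝ S) ≤ k) :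
    S ⊆ spanBelow w k := by
  have key : ∀ j ≤ k, S ⊆ spanBelow w j ∨ j ≤ Module.finrank ℝ (spanBelow w j) := by
    intro j
    induction j with
    | zero => simp
    | succ j ih =>
      intro hj
      rcases ih (by omega) with h | h
      · exact .inl (h.trans (spanBelow_mono w j.le_succ))
      by_cases hwj : w j ∈ spanBelow w j
      · refine .inl fun y hy => spanBelow_mono w j.le_succ ?_
        have hy' : infDist y (spanBelow w j) ≤ 0 := by
          simpa [infDist_zero_of_mem hwj] using (hw j hj).2 hy
        exact ((Submodule.closed_of_finiteDimensional _).mem_iff_infDist_zero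
          ⟨0, zero_mem _⟩).2 (le_antisymm hy' infDist_nonneg)
      · have hlt : spanBelow w j < spanBelow w (j + 1) :=
          (spanBelow_mono w j.le_succ).lt_of_ne fun h =>
            hwj (h ▸ Submodule.subset_span (mem_image_of_mem w j.lt_succ_self))
        exact .inr ((Submodule.finrank_lt_finrank_of_lt hlt).trans_le' h)
  rcases key k le_rfl with h | h
  · exact h
  have hle : spanBelow w k ≤ Submodule.span ℝ S :=
    Submodule.span_le.2 (image_subset_iff.2 fun j hj => Submodule.subset_span (hw j hj).1)
  rw [Submodule.eq_of_le_of_finrank_le hle (hdim.trans h)]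
  exact Submodule.subset_span

theorem IsGreedyFarthest.exists_sum_smul_eq {S : Set E} {w : ℕ → E} {k : ℕ}
    (hw : IsGreedyFarthest S w k) (hdim : Module.finrank ℝ (Submodule.span ℝ S) ≤ k) {z : E}
    (hz : z ∈ S) :
    ∃ μ : ℕ → ℝ, (∀ j < k, |μ j| ≤ 2 ^ (k - 1 - j)) ∧ z = ∑ j ∈ Finset.range k, μ j • w j := by
  simpa using hw.exists_sum_smul_eq_of_infDist_le zero_le_one (hw.subset_spanBelow hdim hz)
    fun j hj => by simpa using (hw j hj).2 hz

end Greedy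

section RandomGreedy

variable {E : Type*} [NormedAddCommGroup E] [NormedSpace ℝ E] [FiniteDimensional ℝ E]
  [MeasurableSpace E] [BorelSpace E]

theorem measurable_infDist_span_range {ι : Type*} [Fintype ι] {v : ι → Ω → E}
    (hv : ∀ i, Measurable (v i)) (y : E) :
    Measurable fun ω => infDist y (Submodule.span ℝ (Set.range fun i => v i ω)) := by
  have key : ∀ ω, infDist y (Submodule.span ℝ (Set.range fun i => v i ω)) =
      ⨅ c : ι → ℚ, dist y (∑ i, (c i : ℝ) • v i ω) := fun ω => by
    rw [← Fintype.range_linearCombination, LinearMap.coe_range]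
    exact infDist_range_eq_iInf_comp (LinearMap.continuous_of_finiteDimensional _)
      (DenseRange.piMap fun _ => Rat.denseRange_cast) y
  simp_rw [key]
  exact .iInf fun c =>
    measurable_const.dist (Finset.measurable_sum _ fun i _ => (hv i).const_smul _)

theorem IsNonemptyCompactRandomSet.exists_measurable_isGreedyFarthest {K : Ω → Set E}
    (hK : IsNonemptyCompactRandomSet K) (k : ℕ) :
    ∃ W : ℕ → Ω → E, (∀ j, Measurable (W j)) ∧ ∀ ω, IsGreedyFarthest (K ω) (fun j => W j ω) k := by
  induction k with
  | zero => exact ⟨fun _ _ => 0, fun _ => measurable_const, fun _ j hj => absurd hj j.not_lt_zero⟩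
  | succ k ih =>
    obtain ⟨W, hWm, hW⟩ := ih
    obtain ⟨V, hVm, hV⟩ := hK.exists_measurable_isMaxOn
      (g := fun ω y => infDist y (spanBelow (fun j => W j ω) k))
      (fun ω => continuous_infDist_pt _) fun y => by
        simp_rw [spanBelow_eq_span_range]
        exact measurable_infDist_span_range (fun i : Fin k => hWm i) y
    refine ⟨Function.update W k V, fun j => ?_, fun ω j hj => ?_⟩
    · rcases eq_or_ne j k with rfl | h
      · simpa using hVm
      · simpa [h] using hWm j
    have hspan : spanBelow (fun l => Function.update W k V l ω) j =
        spanBelow (fun l => W l ω) j :=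
      spanBelow_congr fun l hl => by rw [Function.update_of_ne (by omega)]
    rw [hspan]
    rcases Nat.lt_succ_iff_lt_or_eq.1 hj with hj | rfl
    · simpa [Function.update_of_ne hj.ne] using hW ω j hj
    · simpa using hV ω

end RandomGreedy

theorem exists_measurable_coeffs {E : Type*} [NormedAddCommGroup E] [NormedSpace ℝ E]
    [MeasurableSpace E] [BorelSpace E] [SecondCountableTopology E] {ι : Type*} [Fintype ι]
    {Y : ι → Ω → E} (hY : ∀ i, Measurable (Y i)) {Z : Ω → E} (hZ : Measurable Z) {b : ι → ℝ}
    (hb : ∀ i, 0 ≤ b i) :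
    ∃ lam : ι → Ω → ℝ, (∀ i, Measurable (lam i)) ∧ (∀ i ω, |lam i ω| ≤ b i) ∧
      ∀ ω, (∃ c : ι → ℝ, (∀ i, |c i| ≤ b i) ∧ Z ω = ∑ i, c i • Y i ω) →
        Z ω = ∑ i, lam i ω • Y i ω := by
  let B : Set (ι → ℝ) := Set.univ.pi fun i => Icc (-b i) (b i)
  have hB : IsNonemptyCompactRandomSet fun _ : Ω => B :=
    ⟨fun _ _ => .const _, fun _ => isCompact_univ_pi fun _ => isCompact_Icc,
      fun _ => ⟨0, fun i _ => ⟨neg_nonpos.2 (hb i), hb i⟩⟩⟩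
  obtain ⟨L, hLm, hL⟩ := hB.exists_measurable_isMaxOn
    (g := fun ω c => -‖Z ω - ∑ i, c i • Y i ω‖) (fun ω => by fun_prop) fun c =>
      (hZ.sub (Finset.measurable_sum _ fun i _ => (hY i).const_smul _)).norm.neg
  refine ⟨fun i ω => L ω i, fun i => (measurable_pi_apply i).comp hLm,
    fun i ω => abs_le.2 ((hL ω).1 i trivial), fun ω ⟨c, hc, hZc⟩ => ?_⟩
  have hmax := (hL ω).2 (show c ∈ B from fun i _ => abs_le.1 (hc i))
  simp only [← hZc, sub_self, norm_zero, neg_zero, mem_ofPred_eq] at hmax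
  exact sub_eq_zero.1 (norm_le_zero_iff.1 (by linarith))

theorem randomSet_spanning_selections_general
    (P : Measure Ω)
    (K : Ω → Set (Fin d → ℝ)) (k : ℕ)
    (hmeas : MeasRandomSet m0 K)
    (hcpt : ∀ ω, IsCompact (K ω))
    (h0 : ∀ ω, (0 : Fin d → ℝ) ∈ K ω)
    (hdim : ∀ᵐ ω ∂P, Module.finrank ℝ (Submodule.span ℝ (K ω)) ≤ k) :
    ∃ Y : Fin k → Ω → Fin d → ℝ,
      (∀ i, Measurable (Y i)) ∧ (∀ i ω, Y i ω ∈ K ω) ∧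
      ∀ Z : Ω → Fin d → ℝ, Measurable Z → (∀ᵐ ω ∂P, Z ω ∈ K ω) →
        ∃ lam : Fin k → Ω → ℝ, (∀ i, Measurable (lam i)) ∧
          (∀ i ω, |lam i ω| ≤ 2 ^ (i : ℕ)) ∧
          ∀ᵐ ω ∂P, Z ω = fun j => ∑ i, lam i ω * Y i ω j := by
  have hK : IsNonemptyCompactRandomSet K :=
    isNonemptyCompactRandomSet_of_isOpen hmeas hcpt fun ω => ⟨0, h0 ω⟩
  obtain ⟨W, hWm, hW⟩ := hK.exists_measurable_isGreedyFarthest k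
  refine ⟨fun i => W i.rev, fun i => hWm _, fun i ω => (hW ω i.rev i.rev.isLt).1,
    fun Z hZm hZK => ?_⟩
  obtain ⟨lam, hlm, hlb, hlZ⟩ := exists_measurable_coeffs (fun i => hWm (Fin.rev i)) hZm
    (b := fun i : Fin k => 2 ^ (i : ℕ)) fun i => by positivity
  refine ⟨lam, hlm, hlb, ?_⟩
  filter_upwards [hZK, hdim] with ω hZω hdimω
  obtain ⟨μ, hμ, hZμ⟩ := (hW ω).exists_sum_smul_eq hdimω hZω
  have hbound : ∀ i : Fin k, |μ i.rev| ≤ 2 ^ (i : ℕ) := fun i => by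
    simpa [Fin.val_rev, show k - 1 - (k - (i + 1)) = i by omega] using hμ _ i.rev.isLt
  have hsum : Z ω = ∑ i : Fin k, μ i.rev • W i.rev ω := by
    rw [hZμ, ← Fin.sum_univ_eq_sum_range (fun j => μ j • W j ω)]
    exact (Equiv.sum_comp Fin.revPerm fun i : Fin k => μ i • W i ω).symm
  rw [hlZ ω ⟨_, hbound, hsum⟩]
  ext j
  simp [Finset.sum_apply]

/-- For a compact-valued measurable random set `K` containing `0` with
`dim K ≤ k` a.s., there are measurable selections `Y¹,…,Y^k` of `K` such that every
measurable a.s.-selection `Z` of `K` can be written a.s. as `Z = ∑ λ_i Y^i` with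
measurable coefficients `|λ_i| ≤ 2^{i-1}`. -/
theorem randomSet_spanning_selections
    (P : Measure Ω) [IsProbabilityMeasure P]
    (K : Ω → Set (Fin d → ℝ)) (k : ℕ) (hk : k ≤ d)
    (hmeas : MeasRandomSet m0 K)
    (hcpt : ∀ ω, IsCompact (K ω))
    (h0 : ∀ ω, (0 : Fin d → ℝ) ∈ K ω)
    (hdim : ∀ᵐ ω ∂P, Module.finrank ℝ (Submodule.span ℝ (K ω)) ≤ k) :
    ∃ Y : Fin k → Ω → Fin d → ℝ,
      (∀ i, Measurable (Y i)) ∧ (∀ i ω, Y i ω ∈ K ω) ∧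
      ∀ Z : Ω → Fin d → ℝ, Measurable Z → (∀ᵐ ω ∂P, Z ω ∈ K ω) →
        ∃ lam : Fin k → Ω → ℝ, (∀ i, Measurable (lam i)) ∧
          (∀ i ω, |lam i ω| ≤ 2 ^ (i : ℕ)) ∧
          ∀ᵐ ω ∂P, Z ω = fun j => ∑ i, lam i ω * Y i ω j :=
  randomSet_spanning_selections_general P K k hmeas hcpt h0 hdim
end
end
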